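/- The inner product (x_{π(k)}, x_{σ(k)}) between the states x_{π(k)} and x_{σ(k)} obtained by permuting the creation operators in x_k = a†(k_n)···a†(k_1)|0⟩ equals q^{I(σ⁻¹π)}. -/

import Mathlib

section Combinatorics

/-- Recursive exponent: index accumulation. -/
def eInv {ι : Type*} [DecidableEq ι] : List ι → List ι → ℕ
  | [], _ => 0
  | x :: xs, ys => ys.idxOf x + eInv xs (ys.erase x)

/-- Inversion count of a list. -/
def invCount {α : Type*} [LinearOrder α] : List α → ℕ
  | [] => 0
  | x :: xs => xs.countP (fun y => decide (y < x)) + invCount xs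

lemma indexOf_map_inj {ι β : Type*} [DecidableEq ι] [DecidableEq β] {f : ι → β}
    (hf : Function.Injective f) (x : ι) :
    ∀ l : List ι, (l.map f).idxOf (f x) = l.idxOf x := by
  intro l
  induction l with
  | nil => rfl
  | cons y t ih =>
    by_cases h : y = x
    · subst h; simp [List.idxOf_cons]
    · have h' : f y ≠ f x := fun hc => h (hf hc)
      simp [List.idxOf_cons, h, h', ih]

lemma eInv_map {ι β : Type*} [DecidableEq ι] [DecidableEq β] {f : ι → β}
    (hf : Function.Injective f) :
    ∀ xs ys : List ι, eInv (xs.map f) (ys.map f) = eInv xs ys := by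
  intro xs
  induction xs with
  | nil => intro ys; rfl
  | cons x t ih =>
    intro ys
    show (ys.map f).idxOf (f x) + eInv (t.map f) ((ys.map f).erase (f x)) = _
    rw [indexOf_map_inj hf, ← List.map_erase hf, ih]
    rfl

lemma reverse_ofFn {α : Type*} : ∀ {m : ℕ} (f : Fin m → α),
    (List.ofFn f).reverse = List.ofFn (fun i => f i.rev) := by
  intro m
  induction m with
  | zero => intro f; rfl
  | succ m ih =>
    intro f
    rw [List.ofFn_succ (f := f), List.reverse_cons, ih, List.ofFn_succ' (fun i => f i.rev),
      List.concat_eq_append]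
    congr 1
    · congr 1; funext i; rw [Fin.rev_castSucc]
    · rw [Fin.rev_last]

end Combinatorics
section C2
variable {n : ℕ}

/-- The inversion number of a permutation. -/
def inversions {n : ℕ} (π : Equiv.Perm (Fin n)) : ℕ :=
  (Finset.univ.filter fun p : Fin n × Fin n => p.1 < p.2 ∧ π p.2 < π p.1).card

lemma indexOf_sorted : ∀ (s : List (Fin n)) (x : Fin n),
    s.Pairwise (· < ·) → x ∈ s → s.idxOf x = s.countP (fun y => decide (y < x)) := by
  intro s
  induction s with
  | nil => intro x _ hx; simp at hx
  | cons y t ih =>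
    intro x hp hx
    rw [List.pairwise_cons] at hp
    by_cases h : y = x
    · subst h
      have h0 : t.countP (fun z => decide (z < y)) = 0 := by
        rw [List.countP_eq_zero]
        intro z hz
        simpa using (hp.1 z hz).asymm
      simp [List.idxOf_cons, List.countP_cons, h0]
    · have hxt : x ∈ t := by
        rcases List.mem_cons.1 hx with h1 | h1
        · exact absurd h1.symm h
        · exact h1
      have hyx : y < x := hp.1 x hxt
      simp [List.idxOf_cons, h, List.countP_cons, hyx, ih x hp.2 hxt]

lemma countP_card {l : List (Fin n)} (hl : l.Nodup) (p : Fin n → Prop) [DecidablePred p] :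
    l.countP (fun y => decide (p y)) = (l.toFinset.filter p).card := by
  rw [List.countP_eq_length_filter, ← List.toFinset_card_of_nodup (hl.filter _),
    List.toFinset_filter]
  congr 1
  ext a
  simp

lemma erase_filter_finRange {x : Fin n} {zs : List (Fin n)} (hx : x ∉ zs) :
    ((List.finRange n).filter (fun y => decide (y ∈ x :: zs))).erase x
      = (List.finRange n).filter (fun y => decide (y ∈ zs)) := by
  rw [List.Nodup.erase_eq_filter (((List.nodup_finRange n)).filter _), List.filter_filter]
  refine List.filter_congr ?_
  intro y _
  by_cases h : y = x
  · subst h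
    simp [hx]
  · simp [h]

lemma eInv_sorted : ∀ zs : List (Fin n), zs.Nodup →
    eInv zs ((List.finRange n).filter (fun y => decide (y ∈ zs))) = invCount zs := by
  intro zs
  induction zs with
  | nil => intro _; rfl
  | cons x t ih =>
    intro hnd
    rw [List.nodup_cons] at hnd
    show ((List.finRange n).filter _).idxOf x
        + eInv t (((List.finRange n).filter _).erase x) = _
    rw [erase_filter_finRange hnd.1, ih hnd.2]
    have hsorted : ((List.finRange n).filter (fun y => decide (y ∈ x :: t))).Pairwise (· < ·) :=
      (List.pairwise_lt_finRange n).filter _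
    have hmem : x ∈ (List.finRange n).filter (fun y => decide (y ∈ x :: t)) := by
      rw [List.mem_filter]
      exact ⟨List.mem_finRange x, by simp⟩
    rw [indexOf_sorted _ x hsorted hmem, List.countP_filter]
    have : (List.finRange n).countP (fun a => decide (a < x) && decide (a ∈ x :: t))
        = (List.finRange n).countP (fun a => decide (a ∈ t ∧ a < x)) := by
      refine List.countP_congr ?_
      intro a _
      simp only [Bool.and_eq_true, decide_eq_true_eq]
      constructor
      · rintro ⟨hlt, h1⟩
        rcases List.mem_cons.1 h1 with h2 | h2
        · exact absurd h2 (ne_of_lt hlt)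
        · exact ⟨h2, hlt⟩
      · rintro ⟨h1, hlt⟩
        exact ⟨hlt, List.mem_cons_of_mem _ h1⟩
    rw [this, countP_card (List.nodup_finRange n)]
    have : ((List.finRange n).toFinset.filter (fun a => a ∈ t ∧ a < x)).card
        = (t.toFinset.filter (fun a => a < x)).card := by
      congr 1
      ext a
      simp [List.mem_toFinset, and_comm]
    rw [this, ← countP_card hnd.2]
    rfl

lemma countP_ofFn {α : Type*} (p : α → Bool) : ∀ {m : ℕ} (g : Fin m → α),
    (List.ofFn g).countP p = ∑ i : Fin m, if p (g i) then 1 else 0 := by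
  intro m
  induction m with
  | zero => intro g; simp
  | succ m ih =>
    intro g
    rw [List.ofFn_succ, List.countP_cons, ih, Fin.sum_univ_succ, add_comm]

lemma invCount_ofFn {α : Type*} [LinearOrder α] : ∀ {m : ℕ} (h : Fin m → α),
    invCount (List.ofFn h) =
      ((Finset.univ : Finset (Fin m × Fin m)).filter fun p => p.1 < p.2 ∧ h p.2 < h p.1).card := by
  intro m
  induction m with
  | zero => intro h; simp [invCount]
  | succ m ih =>
    intro h
    rw [List.ofFn_succ]
    show (List.ofFn fun i => h i.succ).countP (fun y => decide (y < h 0))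
        + invCount (List.ofFn fun i => h i.succ) = _
    rw [countP_ofFn, ih (fun i => h i.succ)]
    rw [Finset.card_filter, Finset.card_filter, Fintype.sum_prod_type, Fintype.sum_prod_type,
      Fin.sum_univ_succ]
    congr 1
    · rw [Fin.sum_univ_succ]
      simp [Fin.succ_pos]
    · refine Finset.sum_congr rfl fun i _ => ?_
      rw [Fin.sum_univ_succ]
      have : ¬ (i.succ < (0 : Fin (m+1))) := by simp
      simp [Fin.succ_lt_succ_iff, this]

lemma inversions_conj {n : ℕ} (τ : Equiv.Perm (Fin n)) :
    inversions (Fin.revPerm * τ * Fin.revPerm) = inversions τ := by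
  refine Finset.card_bij' (fun p _ => (p.2.rev, p.1.rev)) (fun p _ => (p.2.rev, p.1.rev))
    ?_ ?_ ?_ ?_
  · intro p hp
    rw [Finset.mem_filter] at hp ⊢
    refine ⟨Finset.mem_univ _, ?_, ?_⟩
    · exact Fin.rev_lt_rev.2 hp.2.1
    · have := hp.2.2
      simp only [Equiv.Perm.mul_apply, Fin.revPerm_apply] at this
      exact Fin.rev_lt_rev.1 this
  · intro p hp
    rw [Finset.mem_filter] at hp ⊢
    refine ⟨Finset.mem_univ _, Fin.rev_lt_rev.2 hp.2.1, ?_⟩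
    simp only [Equiv.Perm.mul_apply, Fin.revPerm_apply, Fin.rev_rev]
    exact Fin.rev_lt_rev.2 hp.2.2
  · intro p _; simp
  · intro p _; simp

end C2

section Operators
variable {V ι : Type*} [AddCommGroup V] [Module ℝ V] [DecidableEq ι]
variable (q : ℝ) (a ad : ι → Module.End ℝ V)
variable (vac : V)

/-- The value of the inner product, computed recursively. -/
noncomputable def fVal (q : ℝ) {ι : Type*} [DecidableEq ι] : List ι → List ι → ℝ
  | [], _ => 1
  | x :: xs, ys => if x ∈ ys then q ^ ys.idxOf x * fVal q xs (ys.erase x) else 0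

lemma fVal_eq_pow : ∀ (xs ys : List ι), xs.Nodup → ys.Nodup → (∀ x ∈ xs, x ∈ ys) →
    fVal q xs ys = q ^ eInv xs ys := by
  intro xs
  induction xs with
  | nil => intro ys _ _ _; rfl
  | cons x t ih =>
    intro ys hnd hynd hsub
    rw [List.nodup_cons] at hnd
    have hx : x ∈ ys := hsub x (List.mem_cons_self (a := x) (l := t))
    show (if x ∈ ys then q ^ ys.idxOf x * fVal q t (ys.erase x) else 0) = _
    rw [if_pos hx, ih (ys.erase x) hnd.2 (hynd.erase x) ?_]
    · show _ = q ^ (ys.idxOf x + eInv t (ys.erase x))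
      rw [pow_add]
    · intro y hy
      rw [List.mem_erase_of_ne (by rintro rfl; exact hnd.1 hy)]
      exact hsub y (List.mem_cons_of_mem _ hy)

variable (hrel : ∀ k l, a k * ad l = (if k = l then 1 else 0) + q • (ad l * a k))
variable (hvac : ∀ k, a k vac = 0)

include hrel hvac in
lemma a_prod_not_mem : ∀ (ys : List ι) (x : ι), x ∉ ys →
    a x (((ys.map ad).prod) vac) = 0 := by
  intro ys
  induction ys with
  | nil => intro x _; simpa using hvac x
  | cons y t ih =>
    intro x hx
    have hxy : x ≠ y := fun hc => hx (hc ▸ List.mem_cons_self (a := y) (l := t))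
    have hxt : x ∉ t := fun hc => hx (List.mem_cons_of_mem _ hc)
    rw [List.map_cons, List.prod_cons, Module.End.mul_apply, ← Module.End.mul_apply (a x),
      hrel x y, if_neg hxy]
    simp [Module.End.mul_apply, ih x hxt]

include hrel hvac in
lemma a_prod_mem : ∀ (ys : List ι), ys.Nodup → ∀ x ∈ ys,
    a x (((ys.map ad).prod) vac)
      = q ^ ys.idxOf x • ((((ys.erase x).map ad).prod) vac) := by
  intro ys
  induction ys with
  | nil => intro _ x hx; simp at hx
  | cons y t ih =>
    intro hnd x hx
    rw [List.nodup_cons] at hnd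
    rw [List.map_cons, List.prod_cons, Module.End.mul_apply, ← Module.End.mul_apply (a x),
      hrel x y]
    by_cases h : x = y
    · subst h
      rw [if_pos rfl, LinearMap.add_apply, LinearMap.smul_apply, Module.End.mul_apply,
        a_prod_not_mem q a ad vac hrel hvac t x hnd.1]
      simp [List.idxOf_cons, List.erase_cons_head]
    · have hxt : x ∈ t := by
        rcases List.mem_cons.1 hx with h1 | h1
        · exact absurd h1 h
        · exact h1
      rw [if_neg h, LinearMap.add_apply, LinearMap.smul_apply, Module.End.mul_apply,
        ih hnd.2 x hxt]
      have herase : (y :: t).erase x = y :: t.erase x :=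
        List.erase_cons_tail (by simp [Ne.symm h])
      have hidx : (y :: t).idxOf x = t.idxOf x + 1 := by
        simp [List.idxOf_cons, Ne.symm h]
      rw [herase, hidx, List.map_cons, List.prod_cons, Module.End.mul_apply]
      rw [LinearMap.zero_apply, zero_add, map_smul, smul_smul, pow_succ, mul_comm]

variable (B : V →ₗ[ℝ] V →ₗ[ℝ] ℝ) (hB : B vac vac = 1)
    (hadj : ∀ k v w, B (ad k v) w = B v (a k w))

include hrel hvac hB hadj in
lemma B_prod : ∀ (xs ys : List ι), xs.length = ys.length → ys.Nodup →
    B (((xs.map ad).prod) vac) (((ys.map ad).prod) vac) = fVal q xs ys := by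
  intro xs
  induction xs with
  | nil =>
    intro ys hlen _
    rw [List.length_eq_zero_iff.1 hlen.symm]
    simpa [fVal] using hB
  | cons x t ih =>
    intro ys hlen hynd
    rw [List.map_cons, List.prod_cons, Module.End.mul_apply, hadj]
    by_cases h : x ∈ ys
    · rw [a_prod_mem q a ad vac hrel hvac ys hynd x h, map_smul]
      have hlen' : t.length = (ys.erase x).length := by
        rw [List.length_erase_of_mem h, ← hlen]
        rfl
      rw [ih (ys.erase x) hlen' (hynd.erase x)]
      show _ = fVal q (x :: t) ys
      rw [show fVal q (x :: t) ys
          = if x ∈ ys then q ^ ys.idxOf x * fVal q t (ys.erase x) else 0 from rfl,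
        if_pos h, smul_eq_mul]
    · rw [a_prod_not_mem q a ad vac hrel hvac ys x h, map_zero]
      rw [show fVal q (x :: t) ys
          = if x ∈ ys then q ^ ys.idxOf x * fVal q t (ys.erase x) else 0 from rfl,
        if_neg h]

end Operators

/-- In the q-deformed Heisenberg algebra, the inner product between the permuted states
`x_{π(k)} = a†(k_{π(n)}) ⋯ a†(k_{π(1)}) |0⟩` and `x_{σ(k)} = a†(k_{σ(n)}) ⋯ a†(k_{σ(1)}) |0⟩`
(for pairwise distinct momenta `k_1, …, k_n`) equals `q^{I(σ⁻¹π)}`. -/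
theorem inner_product_permuted_states {V ι : Type*} [AddCommGroup V] [Module ℝ V]
    [DecidableEq ι] (q : ℝ)
    (a ad : ι → Module.End ℝ V)
    (hrel : ∀ k l, a k * ad l = (if k = l then 1 else 0) + q • (ad l * a k))
    (vac : V) (hvac : ∀ k, a k vac = 0)
    (B : V →ₗ[ℝ] V →ₗ[ℝ] ℝ)
    (hB : B vac vac = 1)
    (hadj : ∀ k v w, B (ad k v) w = B v (a k w))
    (n : ℕ) (k : Fin n → ι) (hk : Function.Injective k)
    (π σ : Equiv.Perm (Fin n)) :
    B ((((List.ofFn fun i => ad (k (π i))).reverse).prod) vac)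
      ((((List.ofFn fun i => ad (k (σ i))).reverse).prod) vac)
      = q ^ inversions (σ⁻¹ * π) := by
  have h1 : ∀ (g : Fin n → ι), (List.ofFn fun i => ad (g i)).reverse
      = ((List.ofFn g).reverse.map ad) := by
    intro g
    rw [List.map_reverse]
    congr 1
    rw [List.map_ofFn]
    rfl
  rw [h1 (fun i => k (π i)), h1 (fun i => k (σ i))]
  have hxnd : ((List.ofFn fun i => k (π i)).reverse).Nodup := by
    rw [List.nodup_reverse]
    exact List.nodup_ofFn.2 (hk.comp π.injective)
  have hynd : ((List.ofFn fun i => k (σ i)).reverse).Nodup := by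
    rw [List.nodup_reverse]
    exact List.nodup_ofFn.2 (hk.comp σ.injective)
  have hlen : ((List.ofFn fun i => k (π i)).reverse).length
      = ((List.ofFn fun i => k (σ i)).reverse).length := by simp
  rw [B_prod q a ad vac hrel hvac B hB hadj _ _ hlen hynd]
  have hsub : ∀ x ∈ (List.ofFn fun i => k (π i)).reverse,
      x ∈ (List.ofFn fun i => k (σ i)).reverse := by
    intro x hx
    rw [List.mem_reverse, List.mem_ofFn] at hx ⊢
    obtain ⟨i, hi⟩ := hx
    exact ⟨σ⁻¹ (π i), by simpa using hi⟩
  rw [fVal_eq_pow q _ _ hxnd hynd hsub]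
  congr 1
  -- exponent computation
  have e1 : ∀ (τ : Equiv.Perm (Fin n)), (List.ofFn fun i => k (τ i)).reverse
      = ((List.ofFn fun i => τ i).reverse).map k := by
    intro τ
    rw [List.map_reverse]
    congr 1
    rw [List.map_ofFn]
    rfl
  rw [e1 π, e1 σ, eInv_map hk]
  have hrevinj : Function.Injective (Fin.rev : Fin n → Fin n) := Fin.rev_injective
  have hg : Function.Injective (fun v : Fin n => Fin.rev (σ⁻¹ v)) :=
    hrevinj.comp (σ⁻¹).injective
  rw [← eInv_map hg]
  set ρ : Equiv.Perm (Fin n) := Fin.revPerm * (σ⁻¹ * π) * Fin.revPerm with hρ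
  have hA : ((List.ofFn fun i => π i).reverse).map (fun v : Fin n => Fin.rev (σ⁻¹ v))
      = List.ofFn ⇑ρ := by
    rw [reverse_ofFn, List.map_ofFn]
    congr 1
  have hBl : ((List.ofFn fun i => σ i).reverse).map (fun v : Fin n => Fin.rev (σ⁻¹ v))
      = List.finRange n := by
    rw [reverse_ofFn, List.map_ofFn]
    have : ((fun v : Fin n => Fin.rev (σ⁻¹ v)) ∘ fun i : Fin n => σ i.rev) = fun i => i := by
      funext i
      simp
    rw [this]
    exact List.ofFn_id n
  rw [hA, hBl]
  have hfil : (List.finRange n).filter (fun y => decide (y ∈ List.ofFn ⇑ρ))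
      = List.finRange n := by
    refine List.filter_eq_self.2 fun y _ => ?_
    simp only [decide_eq_true_eq, List.mem_ofFn]
    exact ⟨ρ⁻¹ y, by simp⟩
  rw [← hfil, eInv_sorted _ (List.nodup_ofFn.2 ρ.injective), invCount_ofFn]
  rw [← inversions_conj (σ⁻¹ * π)]
  rfl
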